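/- Let (a_j)_{j≥0} be i.i.d. standard Gaussian random variables. Then each d_j (0 ≤ j ≤ 2n−1) is a real-valued random variable, the random variables d_0, d_1, …, d_n are independent centered Gaussians with Var(d_j) = 1 for 0 < j < n and Var(d_0) = Var(d_n) = 2, and d_{2n−j} = d_j for all 0 < j < n. -/

import Mathlib

/-!
Pairing the terms `k` and `2n - k` of the defining sum (`b` is symmetric under `k ↦ 2n - k`)
turns `d_j` into the real combination `∑_{k ≤ n} c_{jk} a_k` with `c_{jk} ∝ cos (π j k / n)`, a
discrete cosine transform of type I. Summing the characters `k ↦ exp (iπ m k / n)` of `ℤ/2n`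
shows that the rows of `c` are orthogonal, with squared norm `2` for `j ∈ {0, n}` and `1`
otherwise. So `(d_0, …, d_n)` is a Gaussian vector with diagonal covariance: its coordinates are
independent with the stated variances. Finally `c_{2n-j,k} = c_{jk}`, whence `d_{2n-j} = d_j`.
-/

open MeasureTheory ProbabilityTheory
open scoped ENNReal NNReal

noncomputable section

/-- The sequence `b` of the circulant embedding: `b_0 = √2·a_0`, `b_n = √2·a_n`,
`b_j = a_j` for `0 < j < n` and `b_j = a_{2n-j}` for `n < j < 2n`. -/
def bseq (n : ℕ) (a : ℕ → ℝ) (j : ℕ) : ℝ :=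
  if j = 0 then Real.sqrt 2 * a 0
  else if j = n then Real.sqrt 2 * a n
  else if j < n then a j
  else a (2 * n - j)

/-- `d_j = (2n)^{-1/2} ∑_k b_k exp(2πi jk/(2n))`. -/
def dval (n : ℕ) (a : ℕ → ℝ) (j : ℕ) : ℂ :=
  (Real.sqrt (2 * n) : ℂ)⁻¹ * ∑ k : Fin (2 * n),
    (bseq n a k : ℂ) * Complex.exp (2 * Real.pi * Complex.I * (j : ℕ) * (k : ℕ) / (2 * n))

open Finset Real

lemma sum_range_two_mul_eq_sum_range_succ {M : Type*} [AddCommMonoid M] {n : ℕ} (hn : 0 < n)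
    (f : ℕ → M) :
    ∑ k ∈ range (2 * n), f k =
      ∑ k ∈ range (n + 1), if k = 0 ∨ k = n then f k else f k + f (2 * n - k) := by
  have hreflect : ∑ k ∈ Ico 1 n, f (2 * n - k) = ∑ k ∈ Ico (n + 1) (2 * n), f k := by
    rw [sum_Ico_reflect f 1 (by omega), show 2 * n + 1 - n = n + 1 by omega, Nat.add_sub_cancel]
  have hends : ∀ g : ℕ → M, ∑ k ∈ range (n + 1), g k = g 0 + g n + ∑ k ∈ Ico 1 n, g k := by
    intro g
    rw [sum_range_succ, sum_range_eq_add_Ico _ hn, add_right_comm]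
  rw [← sum_range_add_sum_Ico f (by omega : n + 1 ≤ 2 * n), ← hreflect, hends, hends,
    if_pos (Or.inl rfl), if_pos (Or.inr rfl), sum_congr rfl fun k hk ↦ if_neg (by grind),
    sum_add_distrib, add_assoc]

lemma cos_pi_mul_two_mul_sub_div {n k : ℕ} (hn : n ≠ 0) (hk : k ≤ 2 * n) (j : ℕ) :
    cos (π * j * (2 * n - k : ℕ) / n) = cos (π * j * k / n) := by
  rw [← cos_nat_mul_two_pi_sub _ j]
  push_cast [Nat.cast_sub hk]
  field_simp
  ring_nf

lemma sin_pi_mul_two_mul_sub_div {n k : ℕ} (hn : n ≠ 0) (hk : k ≤ 2 * n) (j : ℕ) :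
    sin (π * j * (2 * n - k : ℕ) / n) = -sin (π * j * k / n) := by
  rw [← sin_nat_mul_two_pi_sub _ j]
  push_cast [Nat.cast_sub hk]
  field_simp

lemma natCast_dvd_iff_natAbs_eq_zero_or_eq {d : ℕ} {m : ℤ} (hm : m.natAbs ≤ d) :
    (d : ℤ) ∣ m ↔ m.natAbs = 0 ∨ m.natAbs = d := by
  rw [Int.natCast_dvd]
  constructor
  · intro hdvd
    rcases Nat.eq_zero_or_pos m.natAbs with h0 | hpos
    · exact Or.inl h0
    · exact Or.inr (le_antisymm hm (Nat.le_of_dvd hpos hdvd))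
  · rintro (h | h) <;> simp [h]

lemma sum_range_two_mul_cos_pi_mul_div {n : ℕ} (hn : n ≠ 0) (m : ℤ) :
    ∑ k ∈ range (2 * n), cos (π * m * k / n) =
      if ((2 * n : ℕ) : ℤ) ∣ m then (2 * n : ℝ) else 0 := by
  set ζ : ℂ := Complex.exp (2 * π * Complex.I / (2 * n : ℕ)) ^ m
  have hprim := Complex.isPrimitiveRoot_exp (2 * n) (by omega)
  have hterm (k : ℕ) : cos (π * m * k / n) = (ζ ^ k).re := by
    rw [← zpow_natCast, ← zpow_mul, ← Complex.exp_int_mul, ← Complex.exp_ofReal_mul_I_re]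
    congr 2
    push_cast
    field_simp
  simp_rw [hterm, ← Complex.re_sum]
  split_ifs with hdvd
  · have hζ : ζ = 1 := (hprim.zpow_eq_one_iff_dvd m).2 hdvd
    simp [hζ]
  · have hζ : ζ ≠ 1 := fun h ↦ hdvd ((hprim.zpow_eq_one_iff_dvd m).1 h)
    have hζ2n : ζ ^ (2 * n) = 1 := by
      rw [← zpow_natCast, ← zpow_mul, mul_comm m, zpow_mul, zpow_natCast, hprim.pow_eq_one,
        one_zpow]
    simp [geom_sum_eq hζ, hζ2n]

section
variable {Ω ι κ : Type*} [MeasurableSpace Ω] {P : Measure Ω} [Fintype ι] {Y : ι → Ω → ℝ}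

lemma covariance_sum_mul_sum_mul_of_iIndepFun (hY : iIndepFun Y P)
    (hL2 : ∀ i, MemLp (Y i) 2 P) (hvar : ∀ i, Var[Y i; P] = 1) (c c' : ι → ℝ) :
    cov[fun ω ↦ ∑ i, c i * Y i ω, fun ω ↦ ∑ i, c' i * Y i ω; P] = ∑ i, c i * c' i := by
  classical
  have := hY.isProbabilityMeasure
  rw [covariance_fun_sum_fun_sum (fun i ↦ (hL2 i).const_mul _) (fun i ↦ (hL2 i).const_mul _)]
  refine sum_congr rfl fun i _ ↦ ?_
  rw [sum_eq_single i (fun k _ hki ↦ ?_) (by simp)]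
  · rw [covariance_const_mul_left, covariance_const_mul_right, covariance_self
      (hL2 i).aemeasurable, hvar, mul_one]
  · rw [covariance_const_mul_left, covariance_const_mul_right,
      (hY.indepFun hki.symm).covariance_eq_zero (hL2 i) (hL2 k), mul_zero, mul_zero]

variable (hY : iIndepFun Y P) (hlaw : ∀ i, HasLaw (Y i) (gaussianReal 0 1) P)
include hY hlaw

lemma hasGaussianLaw_sum_mul [Finite κ] (c : κ → ι → ℝ) :
    HasGaussianLaw (fun ω j ↦ ∑ i, c j i * Y i ω) P := by
  have hjoint : HasGaussianLaw (fun ω i ↦ Y i ω) P :=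
    hY.hasGaussianLaw fun i ↦ (hlaw i).hasGaussianLaw
  let := Fintype.ofFinite κ
  let L : (ι → ℝ) →L[ℝ] (κ → ℝ) := ContinuousLinearMap.pi fun j ↦ ∑ i, c j i • .proj i
  have hL : (fun ω j ↦ ∑ i, c j i * Y i ω) = L ∘ fun ω i ↦ Y i ω := by
    ext ω j
    simp [L]
  exact hL ▸ hjoint.map L

lemma map_sum_mul_eq_gaussianReal (c : ι → ℝ) :
    P.map (fun ω ↦ ∑ i, c i * Y i ω) = gaussianReal 0 (∑ i, c i ^ 2).toNNReal := by
  have hL2 i : MemLp (Y i) 2 P := (hlaw i).hasGaussianLaw.memLp_two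
  have hvar i : Var[Y i; P] = 1 := by simp [(hlaw i).variance_eq]
  have hsum := (hasGaussianLaw_sum_mul hY hlaw fun (_ : Unit) ↦ c).eval ()
  rw [hsum.map_eq_gaussianReal, ← covariance_self hsum.aemeasurable,
    covariance_sum_mul_sum_mul_of_iIndepFun hY hL2 hvar]
  have hmean : ∫ ω, ∑ i, c i * Y i ω ∂P = 0 := by
    have := hY.isProbabilityMeasure
    rw [integral_finsetSum _ fun i _ ↦ ((hL2 i).integrable one_le_two).const_mul _]
    simp [integral_const_mul, (hlaw _).integral_eq, integral_id_gaussianReal]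
  simp_rw [hmean, sq]

lemma iIndepFun_sum_mul_of_pairwise_orthogonal [Finite κ] {c : κ → ι → ℝ}
    (hc : Pairwise fun j j' ↦ ∑ i, c j i * c j' i = 0) :
    iIndepFun (fun j ω ↦ ∑ i, c j i * Y i ω) P := by
  have hL2 i : MemLp (Y i) 2 P := (hlaw i).hasGaussianLaw.memLp_two
  have hvar i : Var[Y i; P] = 1 := by simp [(hlaw i).variance_eq]
  refine (hasGaussianLaw_sum_mul hY hlaw c).iIndepFun_of_covariance_eq_zero fun j j' hjj' ↦ ?_
  rw [covariance_sum_mul_sum_mul_of_iIndepFun hY hL2 hvar, hc hjj']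

end

def cosCoeff (n j k : ℕ) : ℝ :=
  (if k = 0 ∨ k = n then √2 else 2) / √(2 * n) * cos (π * j * k / n)

lemma sum_cosCoeff_mul_cosCoeff_eq_sum_range_two_mul {n : ℕ} (hn : n ≠ 0) (j j' : ℕ) :
    ∑ k : Fin (n + 1), cosCoeff n j k * cosCoeff n j' k =
      (∑ k ∈ range (2 * n), 2 * cos (π * j * k / n) * cos (π * j' * k / n)) / (2 * n) := by
  have hsqrt2 : √2 ^ 2 = 2 := sq_sqrt zero_le_two
  have hsqrt2n : √(2 * n) ^ 2 = 2 * n := sq_sqrt (by positivity)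
  rw [Fin.sum_univ_eq_sum_range (fun k ↦ cosCoeff n j k * cosCoeff n j' k),
    sum_range_two_mul_eq_sum_range_succ (by omega), sum_div]
  refine sum_congr rfl fun k hk ↦ ?_
  rw [mem_range] at hk
  rw [cos_pi_mul_two_mul_sub_div hn (by omega) j, cos_pi_mul_two_mul_sub_div hn (by omega) j']
  split_ifs with hends
  · simp only [cosCoeff, if_pos hends]
    field_simp
    rw [hsqrt2, hsqrt2n]
  · simp only [cosCoeff, if_neg hends]
    field_simp
    rw [hsqrt2n]
    ring

lemma sum_cosCoeff_mul_cosCoeff {n j j' : ℕ} (hn : n ≠ 0) (hj : j ≤ n) (hj' : j' ≤ n) :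
    ∑ k : Fin (n + 1), cosCoeff n j k * cosCoeff n j' k =
      if j = j' then (if j = 0 ∨ j = n then 2 else 1) else 0 := by
  have hprod : ∑ k ∈ range (2 * n), 2 * cos (π * j * k / n) * cos (π * j' * k / n) =
      (∑ k ∈ range (2 * n), cos (π * ((j - j' : ℤ) : ℝ) * k / n)) +
        ∑ k ∈ range (2 * n), cos (π * ((j + j' : ℤ) : ℝ) * k / n) := by
    rw [← sum_add_distrib]
    refine sum_congr rfl fun k _ ↦ ?_
    rw [two_mul_cos_mul_cos]
    push_cast
    ring_nf
  have hsub : ((2 * n : ℕ) : ℤ) ∣ (j - j' : ℤ) ↔ j = j' := by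
    rw [natCast_dvd_iff_natAbs_eq_zero_or_eq (by omega)]
    omega
  have hadd : ((2 * n : ℕ) : ℤ) ∣ (j + j' : ℤ) ↔ j = j' ∧ (j = 0 ∨ j = n) := by
    rw [natCast_dvd_iff_natAbs_eq_zero_or_eq (by omega)]
    omega
  rw [sum_cosCoeff_mul_cosCoeff_eq_sum_range_two_mul hn, hprod,
    sum_range_two_mul_cos_pi_mul_div hn, sum_range_two_mul_cos_pi_mul_div hn]
  simp_rw [hsub, hadd]
  split_ifs <;> first | omega | (field_simp; ring)

lemma dval_eq_sum_cosCoeff {n : ℕ} (hn : n ≠ 0) (a : ℕ → ℝ) (j : ℕ) :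
    dval n a j = ((∑ k : Fin (n + 1), cosCoeff n j k * a k : ℝ) : ℂ) := by
  have hangle (k : ℕ) : 2 * π * Complex.I * (j : ℕ) * (k : ℕ) / (2 * n) =
      ((π * j * k / n : ℝ) : ℂ) * Complex.I := by
    push_cast
    ring
  rw [dval, Fin.sum_univ_eq_sum_range (fun k ↦ (bseq n a k : ℂ) *
      Complex.exp (2 * π * Complex.I * (j : ℕ) * (k : ℕ) / (2 * n))) (2 * n),
    sum_range_two_mul_eq_sum_range_succ (by omega),
    Fin.sum_univ_eq_sum_range (fun k ↦ cosCoeff n j k * a k), Complex.ofReal_sum, mul_sum]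
  refine sum_congr rfl fun k hk ↦ ?_
  rw [mem_range] at hk
  simp only [hangle, Complex.exp_mul_I, ← Complex.ofReal_cos, ← Complex.ofReal_sin]
  split_ifs with hends
  · have hb : bseq n a k = √2 * a k := by
      rcases hends with rfl | rfl <;> simp [bseq, hn]
    have hsin : sin (π * j * k / n) = 0 := by
      rcases hends with rfl | rfl
      · simp
      · rw [mul_div_assoc, div_self (Nat.cast_ne_zero.2 hn), mul_one, mul_comm]
        exact sin_nat_mul_pi j
    rw [hb, hsin, Complex.ofReal_zero, zero_mul, add_zero, cosCoeff, if_pos hends]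
    push_cast
    field_simp
  · have hb : bseq n a k = a k := by
      rw [bseq, if_neg (by omega), if_neg (by omega), if_pos (by omega)]
    have hb' : bseq n a (2 * n - k) = a k := by
      rw [bseq, if_neg (by omega), if_neg (by omega), if_neg (by omega),
        Nat.sub_sub_self (by omega)]
    rw [hb, hb', cos_pi_mul_two_mul_sub_div hn (by omega) j,
      sin_pi_mul_two_mul_sub_div hn (by omega) j,
      cosCoeff, if_neg hends]
    push_cast
    field_simp
    ring

lemma cosCoeff_two_mul_sub {n j : ℕ} (hn : n ≠ 0) (hj : j ≤ 2 * n) (k : ℕ) :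
    cosCoeff n (2 * n - j) k = cosCoeff n j k := by
  simp only [cosCoeff, mul_right_comm π, cos_pi_mul_two_mul_sub_div hn hj]

lemma dval_two_mul_sub {n j : ℕ} (hn : n ≠ 0) (hj : j ≤ 2 * n) (a : ℕ → ℝ) :
    dval n a (2 * n - j) = dval n a j := by
  simp only [dval_eq_sum_cosCoeff hn, cosCoeff_two_mul_sub hn hj]

theorem dval_real_independent_gaussian_general
    {Ω : Type*} [MeasureSpace Ω]
    (a : ℕ → Ω → ℝ) (ha_meas : ∀ j, Measurable (a j))
    (ha_indep : iIndepFun a ℙ)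
    (ha_gauss : ∀ j, Measure.map (a j) ℙ = gaussianReal 0 1)
    (n : ℕ) (hn : 1 ≤ n) :
    (∀ j : ℕ, j < 2 * n → ∀ ω, (dval n (fun i => a i ω) j).im = 0) ∧
    iIndepFun
      (fun (j : Fin (n + 1)) ω => (dval n (fun i => a i ω) (j : ℕ)).re) ℙ ∧
    (∀ j : ℕ, 0 < j → j < n →
      Measure.map (fun ω => (dval n (fun i => a i ω) j).re) ℙ = gaussianReal 0 1) ∧
    (Measure.map (fun ω => (dval n (fun i => a i ω) 0).re) ℙ = gaussianReal 0 2) ∧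
    (Measure.map (fun ω => (dval n (fun i => a i ω) n).re) ℙ = gaussianReal 0 2) ∧
    (∀ j : ℕ, 0 < j → j < n → ∀ ω,
      dval n (fun i => a i ω) (2 * n - j) = dval n (fun i => a i ω) j) := by
  have hn0 : n ≠ 0 := by omega
  have hlaw (k : Fin (n + 1)) : HasLaw (a k) (gaussianReal 0 1) ℙ :=
    ⟨(ha_meas k).aemeasurable, ha_gauss k⟩
  have hindep : iIndepFun (fun k : Fin (n + 1) ↦ a k) ℙ := ha_indep.precomp Fin.val_injective
  have hmarg {j : ℕ} (hj : j ≤ n) :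
      Measure.map (fun ω ↦ ∑ k : Fin (n + 1), cosCoeff n j k * a k ω) ℙ =
        gaussianReal 0 (if j = 0 ∨ j = n then 2 else 1) := by
    rw [map_sum_mul_eq_gaussianReal hindep hlaw]
    simp_rw [sq, sum_cosCoeff_mul_cosCoeff hn0 hj hj]
    split_ifs <;> simp
  refine ⟨fun j _ ω ↦ by rw [dval_eq_sum_cosCoeff hn0, Complex.ofReal_im], ?_,
    fun j hj0 hjn ↦ ?_, ?_, ?_, fun j _ hjn ω ↦ dval_two_mul_sub hn0 (by omega) _⟩
  all_goals simp only [dval_eq_sum_cosCoeff hn0, Complex.ofReal_re]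
  · refine iIndepFun_sum_mul_of_pairwise_orthogonal hindep hlaw fun j j' hjj' ↦ ?_
    dsimp only
    rw [sum_cosCoeff_mul_cosCoeff hn0 (Nat.lt_succ_iff.1 j.2) (Nat.lt_succ_iff.1 j'.2),
      if_neg (Fin.val_ne_of_ne hjj')]
  · rw [hmarg hjn.le, if_neg (by omega)]
  · rw [hmarg (Nat.zero_le n), if_pos (Or.inl rfl)]
  · rw [hmarg le_rfl, if_pos (Or.inr rfl)]

/-- for i.i.d. standard Gaussians `(a_j)`, the `d_j` are real valued,
`d_0, …, d_n` are independent centered Gaussians with variance `1` for `0 < j < n` and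
variance `2` for `j ∈ {0, n}`, and `d_{2n-j} = d_j` for `0 < j < n`. -/
theorem dval_real_independent_gaussian
    {Ω : Type*} [MeasureSpace Ω] [IsProbabilityMeasure (ℙ : Measure Ω)]
    (a : ℕ → Ω → ℝ) (ha_meas : ∀ j, Measurable (a j))
    (ha_indep : iIndepFun a ℙ)
    (ha_gauss : ∀ j, Measure.map (a j) ℙ = gaussianReal 0 1)
    (n : ℕ) (hn : 1 ≤ n) :
    (∀ j : ℕ, j < 2 * n → ∀ ω, (dval n (fun i => a i ω) j).im = 0) ∧
    iIndepFun
      (fun (j : Fin (n + 1)) ω => (dval n (fun i => a i ω) (j : ℕ)).re) ℙ ∧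
    (∀ j : ℕ, 0 < j → j < n →
      Measure.map (fun ω => (dval n (fun i => a i ω) j).re) ℙ = gaussianReal 0 1) ∧
    (Measure.map (fun ω => (dval n (fun i => a i ω) 0).re) ℙ = gaussianReal 0 2) ∧
    (Measure.map (fun ω => (dval n (fun i => a i ω) n).re) ℙ = gaussianReal 0 2) ∧
    (∀ j : ℕ, 0 < j → j < n → ∀ ω,
      dval n (fun i => a i ω) (2 * n - j) = dval n (fun i => a i ω) j) :=
  dval_real_independent_gaussian_general a ha_meas ha_indep ha_gauss n hn

end
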